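/- arXiv:2412.07358 — 5 statements merged into one kernel-verified Lean document; each statement's English description precedes it below -/
import Mathlib

section
/- Let O be a valuation ring that is henselian as a local ring, and let p be a prime ideal of O. Then the localization O_p of O at p is a henselian local ring. In particular, a henselian valuation ring is locally henselian: every stalk of the structure sheaf of Spec O is a henselian local ring. -/
/-!
Nagata's criterion: a local ring `R` is henselian as soon as every polynomial
`X ^ (n + 1) - X ^ n + ∑_{k < n} d k * X ^ k` with all `d k` in the maximal ideal has a unit
root. Indeed, after translating, a Hensel problem asks for a root in `𝔪` of a monic
`f = c₀ + c₁ X + ⋯ + X ^ (n + 1)` with `c₀ ∈ 𝔪` and `c₁` a unit, and the substitution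
`X = -c₀ / (c₁ r)` turns `r ^ (n + 1) * f` into `c₀` times such a polynomial in `r`.

For a valuation ring `O` and a prime `p`, every element of the maximal ideal of `O_p` is already
the image of an element of `p`. So a Nagata polynomial over `O_p` comes from one over `O` with
coefficients in `p`, and Hensel's lemma in `O` at `1` gives a root `w ≡ 1`, which lies outside
`p` and hence stays a unit in `O_p`.
-/

open AlgebraicGeometry Polynomial IsLocalRing

universe u

variable {R : Type*} [CommRing R]

theorem IsLocalRing.isUnit_of_sub_mem_maximalIdeal [IsLocalRing R] {x y : R}
    (h : x - y ∈ maximalIdeal R) (hy : IsUnit y) : IsUnit x := by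
  rw [← notMem_maximalIdeal] at hy ⊢
  exact fun hx => hy (by simpa using (maximalIdeal R).sub_mem hx h)

namespace Polynomial

noncomputable def nagata (n : ℕ) (d : ℕ → R) : R[X] :=
  X ^ (n + 1) - X ^ n + ∑ k ∈ Finset.range n, C (d k) * X ^ k

theorem eval_nagata (n : ℕ) (d : ℕ → R) (r : R) :
    (nagata n d).eval r = r ^ (n + 1) - r ^ n + ∑ k ∈ Finset.range n, d k * r ^ k := by
  simp [nagata, eval_finsetSum]

theorem eval_derivative_nagata_one (n : ℕ) (d : ℕ → R) :
    (nagata n d).derivative.eval 1 = 1 + ∑ k ∈ Finset.range n, d k * k := by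
  simp [nagata, eval_finsetSum, derivative_X_pow]

theorem monic_nagata [Nontrivial R] (n : ℕ) (d : ℕ → R) : (nagata n d).Monic := by
  have hlt : degree ((X : R[X]) ^ n) < degree ((X : R[X]) ^ (n + 1)) := by
    rw [degree_X_pow, degree_X_pow]
    exact_mod_cast n.lt_succ_self
  refine ((monic_X_pow (n + 1)).sub_of_left hlt).add_of_left ?_
  rw [degree_sub_eq_left_of_degree_lt hlt, degree_X_pow]
  refine (degree_sum_le _ _).trans_lt ((Finset.sup_lt_iff (WithBot.bot_lt_coe _)).2 fun k hk => ?_)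
  exact (degree_C_mul_X_pow_le _ _).trans_lt (by exact_mod_cast (by simp at hk; omega))

theorem map_nagata {S : Type*} [CommRing S] (φ : R →+* S) {n : ℕ} {d : ℕ → R} {d' : ℕ → S}
    (h : ∀ k < n, φ (d k) = d' k) : (nagata n d).map φ = nagata n d' := by
  simp only [nagata, Polynomial.map_add, Polynomial.map_sub, Polynomial.map_pow, map_X,
    Polynomial.map_sum, Polynomial.map_mul, map_C]
  congr 1
  exact Finset.sum_congr rfl fun k hk => by rw [h k (Finset.mem_range.mp hk)]

theorem eval_nagata_eq_sum_reflect (n : ℕ) {g : ℕ → R} (g0 : g 0 = 1) (g1 : g 1 = -1) (r : R) :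
    (nagata n fun k => g (n + 1 - k)).eval r =
      ∑ j ∈ Finset.range (n + 2), g j * r ^ (n + 1 - j) := by
  have hsum : ∑ k ∈ Finset.range n, g (n + 1 - k) * r ^ (n + 1 - (n + 1 - k)) =
      ∑ k ∈ Finset.range n, g (n + 1 - k) * r ^ k :=
    Finset.sum_congr rfl fun k hk => by rw [Nat.sub_sub_self (by simp at hk; omega)]
  rw [← Finset.sum_range_reflect, Finset.sum_range_succ, Finset.sum_range_succ, eval_nagata]
  simp only [show n + 2 - 1 = n + 1 by omega, g0, g1, Nat.sub_zero, Nat.sub_self, one_mul,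
    neg_one_mul, Nat.add_sub_cancel_left, Nat.add_sub_cancel, hsum]
  abel

end Polynomial

theorem HenselianLocalRing.exists_isUnit_isRoot_nagata [HenselianLocalRing R] {n : ℕ}
    {d : ℕ → R} (hd : ∀ k < n, d k ∈ maximalIdeal R) :
    ∃ r, IsUnit r ∧ (nagata n d).IsRoot r := by
  have hsum : ∀ e : ℕ → R, ∑ k ∈ Finset.range n, d k * e k ∈ maximalIdeal R := fun e =>
    Ideal.sum_mem _ fun k hk => Ideal.mul_mem_right _ _ (hd k (Finset.mem_range.mp hk))
  obtain ⟨r, hroot, hr⟩ := HenselianLocalRing.is_henselian _ (monic_nagata n d) 1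
    (by simpa [eval_nagata] using hsum 1)
    (isUnit_of_sub_mem_maximalIdeal (by simpa [eval_derivative_nagata_one] using hsum _)
      isUnit_one)
  exact ⟨r, isUnit_of_sub_mem_maximalIdeal hr isUnit_one, hroot⟩

theorem HenselianLocalRing.of_exists_isRoot_mem_maximalIdeal [IsLocalRing R]
    (h : ∀ f : R[X], f.Monic → f.coeff 0 ∈ maximalIdeal R → IsUnit (f.coeff 1) →
      ∃ x ∈ maximalIdeal R, f.IsRoot x) : HenselianLocalRing R where
  is_henselian f hf a₀ h₀ h₁ := by
    have hcoeff1 : (f.comp (X + C a₀)).coeff 1 = f.derivative.eval a₀ := by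
      have h := coeff_derivative (f.comp (X + C a₀)) 0
      rw [coeff_zero_eq_eval_zero, derivative_comp] at h
      simpa using h.symm
    obtain ⟨x, hx, hroot⟩ := h (f.comp (X + C a₀)) (hf.comp_X_add_C a₀)
      (by simpa [coeff_zero_eq_eval_zero, eval_comp]) (hcoeff1 ▸ h₁)
    exact ⟨x + a₀, by simpa [IsRoot, eval_comp] using hroot, by simpa using hx⟩

theorem IsLocalRing.exists_isRoot_mem_maximalIdeal_of_nagata [IsLocalRing R]
    (h : ∀ n (d : ℕ → R), (∀ k < n, d k ∈ maximalIdeal R) → ∃ r, IsUnit r ∧ (nagata n d).IsRoot r)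
    {f : R[X]} (hf : f.Monic) (h₀ : f.coeff 0 ∈ maximalIdeal R) (h₁ : IsUnit (f.coeff 1)) :
    ∃ x ∈ maximalIdeal R, f.IsRoot x := by
  obtain ⟨u, hu⟩ := h₁
  obtain ⟨n, hn⟩ : ∃ n, f.natDegree = n + 1 := Nat.exists_eq_succ_of_ne_zero fun hdeg => by
    simp [hf.natDegree_eq_zero.mp hdeg, coeff_one] at hu
  set c₀ := f.coeff 0
  -- `g j` is the coefficient of `X ^ (n + 1 - j)`, chosen so that
  -- `c₀ * g j = f.coeff j * (-c₀ / u) ^ j`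
  let g : ℕ → R := fun j => if j = 0 then 1 else f.coeff j * c₀ ^ (j - 1) * (-↑u⁻¹) ^ j
  have g1 : g 1 = -1 := by simp [g, ← hu]
  obtain ⟨r, ⟨r, rfl⟩, hroot⟩ := h n (fun k => g (n + 1 - k)) fun k hk => by
    simp only [g, if_neg (by omega : n + 1 - k ≠ 0)]
    exact Ideal.mul_mem_right _ _ (Ideal.mul_mem_left _ _ (Ideal.pow_mem_of_mem _ h₀ _ (by omega)))
  have key : f.eval (c₀ * (-↑u⁻¹ * ↑r⁻¹)) * ↑r ^ (n + 1) =
      c₀ * (nagata n fun k => g (n + 1 - k)).eval ↑r := by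
    rw [eval_nagata_eq_sum_reflect n (by simp [g]) g1, eval_eq_sum_range, hn, Finset.sum_mul,
      Finset.mul_sum]
    refine Finset.sum_congr rfl fun j hj => ?_
    obtain ⟨m, hm⟩ : ∃ m, n + 1 = j + m := ⟨n + 1 - j, by simp at hj; omega⟩
    rcases j with _ | i
    · simp [g, c₀]
    · have hr : (↑r⁻¹ : R) ^ (i + 1) * ↑r ^ (i + 1) = 1 := by
        rw [← mul_pow, Units.inv_mul, one_pow]
      simp only [g, if_neg (Nat.succ_ne_zero i), hm, Nat.add_sub_cancel_left, Nat.add_sub_cancel,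
        pow_add]
      linear_combination (f.coeff (i + 1) * c₀ ^ (i + 1) * (-↑u⁻¹ : R) ^ (i + 1) * ↑r ^ m) * hr
  refine ⟨c₀ * (-↑u⁻¹ * ↑r⁻¹), Ideal.mul_mem_right _ _ h₀, ?_⟩
  rw [hroot.eq_zero, mul_zero] at key
  exact ((r ^ (n + 1)).isUnit.mul_left_eq_zero).mp key

theorem HenselianLocalRing.of_exists_isUnit_isRoot_nagata [IsLocalRing R]
    (h : ∀ n (d : ℕ → R), (∀ k < n, d k ∈ maximalIdeal R) → ∃ r, IsUnit r ∧ (nagata n d).IsRoot r) :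
    HenselianLocalRing R :=
  of_exists_isRoot_mem_maximalIdeal fun _ hf h₀ h₁ =>
    exists_isRoot_mem_maximalIdeal_of_nagata h hf h₀ h₁

theorem PreValuationRing.exists_algebraMap_eq_of_mem_maximalIdeal {O : Type*} [CommRing O]
    [PreValuationRing O] (p : Ideal O) [p.IsPrime] (S : Type*) [CommRing S] [Algebra O S]
    [IsLocalization.AtPrime S p] [IsLocalRing S] {x : S} (hx : x ∈ maximalIdeal S) :
    ∃ y ∈ p, algebraMap O S y = x := by
  rw [← IsLocalization.AtPrime.map_eq_maximalIdeal p,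
    IsLocalization.mem_map_algebraMap_iff p.primeCompl] at hx
  obtain ⟨⟨⟨y, hy⟩, ⟨s, hs⟩⟩, hx⟩ := hx
  obtain ⟨c, rfl⟩ | ⟨c, rfl⟩ := ValuationRing.dvd_total s y
  · refine ⟨c, (‹p.IsPrime›.mem_or_mem hy).resolve_left hs, ?_⟩
    refine (IsLocalization.map_units S (⟨s, hs⟩ : p.primeCompl)).mul_left_cancel ?_
    simpa [mul_comm x] using hx.symm
  · exact absurd (p.mul_mem_right c hy) hs

theorem IsLocalization.AtPrime.henselianLocalRing_of_preValuationRing {O : Type*} [CommRing O]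
    [PreValuationRing O] [HenselianLocalRing O] (p : Ideal O) [p.IsPrime] (S : Type*)
    [CommRing S] [Algebra O S] [IsLocalization.AtPrime S p] : HenselianLocalRing S := by
  have := IsLocalization.AtPrime.isLocalRing S p
  refine .of_exists_isUnit_isRoot_nagata fun n d hd => ?_
  choose! e hep hed using fun k (hk : k < n) =>
    PreValuationRing.exists_algebraMap_eq_of_mem_maximalIdeal p S (hd k hk)
  obtain ⟨w, hw, hroot⟩ := HenselianLocalRing.exists_isUnit_isRoot_nagata
    fun k hk => le_maximalIdeal_of_isPrime p (hep k hk)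
  refine ⟨algebraMap O S w, IsLocalization.map_units S (⟨w, ?_⟩ : p.primeCompl), ?_⟩
  · exact fun hwp => notMem_maximalIdeal.mpr hw (le_maximalIdeal_of_isPrime p hwp)
  · simpa [map_nagata (algebraMap O S) hed] using hroot.map (f := algebraMap O S)

/-- if `O` is a henselian valuation ring and `p` a prime ideal of `O`, then
the localization `O_p` is a henselian local ring; in particular every stalk of the
structure sheaf of `Spec O` is a henselian local ring. -/
theorem henselian_valuationRing_isLocallyHenselian
    (O : Type u) [CommRing O] [IsDomain O] [ValuationRing O] [HenselianLocalRing O]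
    (p : Ideal O) [p.IsPrime] :
    HenselianLocalRing (Localization.AtPrime p) ∧
      ∀ s : PrimeSpectrum O,
        HenselianLocalRing ((Spec (CommRingCat.of O)).presheaf.stalk s) :=
  ⟨IsLocalization.AtPrime.henselianLocalRing_of_preValuationRing p _, fun s =>
    -- the stalks of `Spec O` are by definition those of `Spec.structureSheaf O`, which carry the
    -- `IsLocalization.AtPrime` instance
    IsLocalization.AtPrime.henselianLocalRing_of_preValuationRing s.asIdeal
      ((Spec.structureSheaf O).presheaf.stalk s)⟩
end

section
/- Let O be a valuation ring and let U be a nonempty open subset of the prime spectrum Spec O. Then the following are equivalent: (1) U contains a greatest element with respect to inclusion of prime ideals (so the corresponding open subscheme is a local scheme); (2) U is an affine open of the scheme Spec O; (3) U is quasi-compact; (4) U = D(f), the basic open set of some nonzero f ∈ O; (5) there exists a prime ideal p of O such that U = { q ∈ Spec O : q ⊆ p }. -/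
/-!
Every quasi-compact open of `Spec O` is a finite union of basic opens `D(fᵢ)`, i.e. the complement
of `V(I)` for a finitely generated ideal `I`; since `O` is Bézout, `I = (f)` and the open is `D(f)`.
Conversely the primes not containing `f` form a chain, so their union is again a prime, the
greatest point of `D(f)`. Finally, an open with a greatest point `p` contains a basic neighbourhood
of `p`, and that neighbourhood already contains every generalization of `p`.
-/

open AlgebraicGeometry TopologicalSpace

universe u

theorem Ideal.sSup_isPrime_of_isChain {R : Type*} [CommSemiring R] {s : Set (Ideal R)}
    (hs : s.Nonempty) (hs' : IsChain (· ≤ ·) s) (H : ∀ p ∈ s, p.IsPrime) : (sSup s).IsPrime := by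
  have hmem {x : R} : x ∈ sSup s ↔ ∃ p ∈ s, x ∈ p :=
    Submodule.mem_sSup_of_directed hs hs'.directedOn
  refine ⟨fun htop => ?_, fun {x y} hxy => ?_⟩
  · obtain ⟨p, hp, h1⟩ := hmem.mp (htop ▸ Submodule.mem_top : (1 : R) ∈ sSup s)
    exact (H p hp).ne_top (p.eq_top_of_isUnit_mem h1 isUnit_one)
  · obtain ⟨p, hp, hxy⟩ := hmem.mp hxy
    exact ((H p hp).mem_or_mem hxy).imp (le_sSup hp ·) (le_sSup hp ·)

namespace PrimeSpectrum

variable {R : Type*} [CommRing R]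

theorem exists_eq_basicOpen_of_forall_le {U : Opens (PrimeSpectrum R)} {p : PrimeSpectrum R}
    (hp : p ∈ U) (hmax : ∀ q ∈ U, q.asIdeal ≤ p.asIdeal) : ∃ f : R, U = basicOpen f := by
  obtain ⟨-, ⟨f, rfl⟩, hpf, hfU⟩ :=
    isTopologicalBasis_basic_opens.exists_subset_of_mem_open hp U.isOpen
  exact ⟨f, le_antisymm (fun q hq hfq => hpf (hmax q hq hfq)) hfU⟩

theorem exists_eq_basicOpen_of_isCompact [IsBezout R] {U : Opens (PrimeSpectrum R)}
    (hU : IsCompact (U : Set (PrimeSpectrum R))) : ∃ f : R, U = basicOpen f := by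
  obtain ⟨I, hI, hIU⟩ := isCompact_isOpen_iff_ideal.mp ⟨hU, U.isOpen⟩
  obtain ⟨f, rfl⟩ := (IsBezout.isPrincipal_of_FG I hI).principal
  refine ⟨f, Opens.ext ?_⟩
  rw [← hIU, Ideal.submodule_span_eq, zeroLocus_span, basicOpen_eq_zeroLocus_compl]

end PrimeSpectrum

open PrimeSpectrum in
theorem ValuationRing.exists_greatest_mem_basicOpen {R : Type*} [CommRing R] [IsDomain R]
    [ValuationRing R] {f : R} (hf : f ≠ 0) :
    ∃ p ∈ basicOpen f, ∀ q ∈ basicOpen f, q.asIdeal ≤ p.asIdeal := by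
  set s := asIdeal '' (basicOpen f : Set (PrimeSpectrum R))
  have hs : s.Nonempty := ⟨_, ⊥, (hf : f ∉ (⊥ : Ideal R)), rfl⟩
  have hchain : IsChain (· ≤ ·) s := fun I _ J _ _ => Std.Total.total I J
  have hprime : (sSup s).IsPrime :=
    Ideal.sSup_isPrime_of_isChain hs hchain (by rintro _ ⟨q, -, rfl⟩; exact q.isPrime)
  have hfP : f ∉ sSup s := by
    rw [Submodule.mem_sSup_of_directed hs hchain.directedOn]
    rintro ⟨_, ⟨q, hq, rfl⟩, hfq⟩
    exact hq hfq
  exact ⟨⟨sSup s, hprime⟩, hfP, fun q hq => le_sSup ⟨q, hq, rfl⟩⟩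

/-- for a nonempty open subset `U` of the prime spectrum of a valuation
ring `O`, the following are equivalent: (1) `U` has a greatest element (so the
corresponding open subscheme is local); (2) `U` is an affine open of `Spec O`;
(3) `U` is quasi-compact; (4) `U` is a basic open `D(f)` for some nonzero `f`;
(5) `U = {q | q ⊆ p}` for some prime `p`. -/
theorem valuationRing_opens_tfae
    (O : Type u) [CommRing O] [IsDomain O] [ValuationRing O]
    (U : Opens (PrimeSpectrum O)) (hU : (U : Set (PrimeSpectrum O)).Nonempty) :
    List.TFAE
      [ ∃ p ∈ U, ∀ q ∈ U, q.asIdeal ≤ p.asIdeal,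
        IsAffineOpen (X := Spec (CommRingCat.of O)) U,
        IsCompact (U : Set (PrimeSpectrum O)),
        ∃ f : O, f ≠ 0 ∧ U = PrimeSpectrum.basicOpen f,
        ∃ p : PrimeSpectrum O,
          (U : Set (PrimeSpectrum O)) = {q : PrimeSpectrum O | q.asIdeal ≤ p.asIdeal} ] := by
  have hne (f : O) (hf : U = PrimeSpectrum.basicOpen f) : f ≠ 0 := by
    rintro rfl
    simp [hf] at hU
  tfae_have 1 → 5 := fun ⟨p, hp, hmax⟩ => ⟨p, Set.ext fun q =>
    ⟨hmax q, fun hq => ((PrimeSpectrum.le_iff_specializes q p).mp hq).mem_open U.isOpen hp⟩⟩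
  tfae_have 5 → 1 := by
    rintro ⟨p, hUp⟩
    refine ⟨p, ?_, fun q hq => ?_⟩
    · rw [← SetLike.mem_coe, hUp]
      exact le_refl p.asIdeal
    · rwa [← SetLike.mem_coe, hUp] at hq
  tfae_have 1 → 4 := fun ⟨p, hp, hmax⟩ =>
    let ⟨f, hf⟩ := PrimeSpectrum.exists_eq_basicOpen_of_forall_le hp hmax
    ⟨f, hne f hf, hf⟩
  tfae_have 4 → 1 := by
    rintro ⟨f, hf, rfl⟩
    exact ValuationRing.exists_greatest_mem_basicOpen hf
  tfae_have 4 → 2 := by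
    rintro ⟨f, -, rfl⟩
    exact IsAffineOpen.Spec_basicOpen (R := CommRingCat.of O) f
  tfae_have 2 → 3 := IsAffineOpen.isCompact
  tfae_have 3 → 4 := fun hc =>
    let ⟨f, hf⟩ := PrimeSpectrum.exists_eq_basicOpen_of_isCompact hc
    ⟨f, hne f hf, hf⟩
  tfae_finish
end

section
/- Let O be a valuation ring and let Z be a nonempty closed subset of the prime spectrum Spec O. Then Z is irreducible; more precisely, p = ⋂_{q ∈ Z} q is a prime ideal belonging to Z, Z equals the vanishing set V(p) = { q ∈ Spec O : p ⊆ q }, and p is a generic point of Z (Z is the closure of {p}). -/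
/-
The primes of a valuation ring form a chain, and an intersection of a nonempty chain of primes
is prime. So the vanishing ideal `p` of `Z` is a prime, and for closed `Z` we have
`Z = V(p) = closure {p}`: `p` is a generic point of `Z`, which is therefore irreducible.
-/

universe u

namespace PrimeSpectrum

variable {R : Type*} [CommRing R]

theorem vanishingIdeal_eq_sInf (Z : Set (PrimeSpectrum R)) :
    vanishingIdeal Z = sInf (asIdeal '' Z) := by
  rw [vanishingIdeal, sInf_image]

theorem isPrime_vanishingIdeal_of_isChain {Z : Set (PrimeSpectrum R)} (hZ : Z.Nonempty)
    (hchain : IsChain (· ≤ ·) Z) : (vanishingIdeal Z).IsPrime := by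
  rw [vanishingIdeal_eq_sInf]
  refine Ideal.sInf_isPrime_of_isChain (hZ.image _)
    (hchain.image_of_map_rel _ _ _ fun x y => (asIdeal_le_asIdeal x y).2) ?_
  rintro _ ⟨q, -, rfl⟩
  exact q.isPrime

theorem isGenericPoint_vanishingIdeal {Z : Set (PrimeSpectrum R)} (hZ : IsClosed Z)
    (hprime : (vanishingIdeal Z).IsPrime) : IsGenericPoint ⟨vanishingIdeal Z, hprime⟩ Z := by
  rw [isGenericPoint_def, closure_singleton, zeroLocus_vanishingIdeal_eq_closure, hZ.closure_eq]

end PrimeSpectrum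

theorem ValuationRing.isChain_primeSpectrum (O : Type*) [CommRing O] [IsDomain O]
    [ValuationRing O] (Z : Set (PrimeSpectrum O)) : IsChain (· ≤ ·) Z :=
  fun p _ q _ _ => Std.Total.total (r := (· ≤ ·)) p.asIdeal q.asIdeal

/-- a nonempty closed subset `Z` of the prime spectrum of a valuation ring
is irreducible; more precisely `p = ⋂_{q ∈ Z} q` is a prime ideal belonging to `Z`,
`Z = V(p)` and `p` is a generic point of `Z`. -/
theorem valuationRing_closed_subset_irreducible
    (O : Type u) [CommRing O] [IsDomain O] [ValuationRing O]
    (Z : Set (PrimeSpectrum O)) (hZ : IsClosed Z) (hZne : Z.Nonempty) :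
    IsIrreducible Z ∧
      ∃ p : PrimeSpectrum O,
        (p.asIdeal : Set O) = ⋂ q ∈ Z, (q.asIdeal : Set O) ∧
        p ∈ Z ∧
        Z = PrimeSpectrum.zeroLocus (p.asIdeal : Set O) ∧
        IsGenericPoint p Z := by
  have hprime := PrimeSpectrum.isPrime_vanishingIdeal_of_isChain hZne
    (ValuationRing.isChain_primeSpectrum O Z)
  have hgen := PrimeSpectrum.isGenericPoint_vanishingIdeal hZ hprime
  refine ⟨hgen.isIrreducible, _, ?_, hgen.mem,
    hgen.def.symm.trans (PrimeSpectrum.closure_singleton _), hgen⟩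
  ext f
  simp [PrimeSpectrum.mem_vanishingIdeal]
end

section
/- Let T be an irreducible quasi-sober topological space with generic point η, let G be a group, and let D be a sheaf of G-sets on T. Then the following are equivalent: (a) for all nonempty open subsets V ⊆ U, the restriction map D(U) → D(V) is injective on orbits; (b) for every open U and every s ∈ U, the germ map D(U) → D_s is injective on orbits; (c) for every nonempty open U, the germ map D(U) → D_η is injective on orbits; (d) for every point s ∈ T, the canonical map D_s → D_η is injective on orbits; (e) for every pair of points s, s' ∈ T with s in the closure of {s'}, the canonical map D_s → D_{s'} is injective on orbits. -/
/-!
Every nonempty open set contains the generic point `η`, and every point is a specialization of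
`η`. Equality of germs at `s` is equality of restrictions to some open neighbourhood of `s`, and a
section of a sheaf is determined by its germs; so each of the five conditions says that `g` fixes a
section (or germ) as soon as it fixes its image at `η`.
-/

open CategoryTheory TopologicalSpace Opposite

universe u

namespace TopCat.Presheaf

variable {X : TopCat.{u}}

theorem exists_res_eq_of_germ_eq (F : X.Presheaf (Type u)) {U : Opens X} {a b : F.obj (op U)}
    {s : X} (hs : s ∈ U) (h : F.germ U s hs a = F.germ U s hs b) :
    ∃ (V : Opens X) (hVU : V ≤ U), s ∈ V ∧
      F.map (homOfLE hVU).op a = F.map (homOfLE hVU).op b := by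
  obtain ⟨V, hsV, iU, iU', hV⟩ := F.germ_eq s hs hs a b h
  rw [Subsingleton.elim iU' iU] at hV
  exact ⟨V, leOfHom iU, hsV, hV⟩

theorem stalkFunctor_map_eq_of_stalkSpecializes_eq (F : X.Presheaf (Type u)) (φ : F ⟶ F)
    {x y : X} (h : x ⤳ y)
    (H : ∀ (U : Opens X) (hy : y ∈ U) (d : F.obj (op U)),
      F.germ U x (h.mem_open U.isOpen hy) (φ.app (op U) d) =
        F.germ U x (h.mem_open U.isOpen hy) d → φ.app (op U) d = d)
    (z : F.stalk y)
    (hz : F.stalkSpecializes h ((stalkFunctor (Type u) y).map φ z) = F.stalkSpecializes h z) :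
    (stalkFunctor (Type u) y).map φ z = z := by
  obtain ⟨U, hyU, d, rfl⟩ := F.exists_germ_eq z
  rw [stalkFunctor_map_germ_apply, germ_stalkSpecializes_apply,
    germ_stalkSpecializes_apply] at hz
  rw [stalkFunctor_map_germ_apply, H U hyU d hz]

theorem stalkSpecializes_trans_eq_of_eq (F : X.Presheaf (Type u)) {x y z : X} (h : x ⤳ y)
    (h' : y ⤳ z) {a b : F.stalk z} (hab : F.stalkSpecializes h' a = F.stalkSpecializes h' b) :
    F.stalkSpecializes (h.trans h') a = F.stalkSpecializes (h.trans h') b := by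
  rw [← stalkSpecializes_comp_apply F h h', hab, stalkSpecializes_comp_apply]

theorem app_eq_of_germ_eq_of_specializes (F : Sheaf (Type u) X) (φ : F.obj ⟶ F.obj)
    {η : X} {U : Opens X} (hU : ∀ s ∈ U, η ⤳ s) (hη : η ∈ U)
    (H : ∀ (s : X) (h : η ⤳ s) (z : F.presheaf.stalk s),
      F.presheaf.stalkSpecializes h ((stalkFunctor (Type u) s).map φ z) =
        F.presheaf.stalkSpecializes h z → (stalkFunctor (Type u) s).map φ z = z)
    (d : F.obj.obj (op U))
    (hd : F.presheaf.germ U η hη (φ.app (op U) d) = F.presheaf.germ U η hη d) :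
    φ.app (op U) d = d := by
  refine section_ext F U _ _ fun s hs => ?_
  rw [← stalkFunctor_map_germ_apply]
  refine H s (hU s hs) _ ?_
  rwa [stalkFunctor_map_germ_apply, germ_stalkSpecializes_apply, germ_stalkSpecializes_apply]

end TopCat.Presheaf

theorem sheaf_of_G_sets_injective_on_orbits_tfae_general
    {T : TopCat.{u}}
    (η : T) (hη : IsGenericPoint η (Set.univ : Set T))
    (G : Type u) [Group G]
    (D : TopCat.Sheaf (Type u) T) (ρ : G →* CategoryTheory.End D.val) :
    List.TFAE
      [ ∀ (U V : Opens T) (h : V ≤ U), (V : Set T).Nonempty →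
          ∀ (d : D.val.obj (op U)) (g : G),
            D.val.map (homOfLE h).op ((ρ g).app (op U) d) = D.val.map (homOfLE h).op d →
              (ρ g).app (op U) d = d,
        ∀ (U : Opens T) (s : T) (hs : s ∈ U),
          ∀ (d : D.val.obj (op U)) (g : G),
            D.presheaf.germ U s hs ((ρ g).app (op U) d) = D.presheaf.germ U s hs d →
              (ρ g).app (op U) d = d,
        ∀ (U : Opens T), (U : Set T).Nonempty → ∀ (hη' : η ∈ U),
          ∀ (d : D.val.obj (op U)) (g : G),
            D.presheaf.germ U η hη' ((ρ g).app (op U) d) = D.presheaf.germ U η hη' d →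
              (ρ g).app (op U) d = d,
        ∀ (s : T) (h : η ⤳ s),
          ∀ (x : D.presheaf.stalk s) (g : G),
            D.presheaf.stalkSpecializes h
                ((TopCat.Presheaf.stalkFunctor (Type u) s).map (ρ g) x) =
              D.presheaf.stalkSpecializes h x →
              (TopCat.Presheaf.stalkFunctor (Type u) s).map (ρ g) x = x,
        ∀ (s s' : T) (h : s' ⤳ s),
          ∀ (x : D.presheaf.stalk s) (g : G),
            D.presheaf.stalkSpecializes h
                ((TopCat.Presheaf.stalkFunctor (Type u) s).map (ρ g) x) =
              D.presheaf.stalkSpecializes h x →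
              (TopCat.Presheaf.stalkFunctor (Type u) s).map (ρ g) x = x ] := by
  have hspec (s : T) : η ⤳ s := hη.specializes trivial
  tfae_have 1 → 2 := fun H U s hs d g hd => by
    obtain ⟨V, hVU, hsV, hres⟩ := D.presheaf.exists_res_eq_of_germ_eq hs hd
    exact H U V hVU ⟨s, hsV⟩ d g hres
  tfae_have 2 → 3 := fun H U _ => H U η
  tfae_have 3 → 4 := fun H s h z g =>
    D.presheaf.stalkFunctor_map_eq_of_stalkSpecializes_eq (ρ g) h
      (fun U hs d => H U ⟨s, hs⟩ _ d g) z
  tfae_have 4 → 1 := fun H U V hVU hV d g hres => by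
    have hηV : η ∈ V := (hη.mem_open_set_iff V.isOpen).2 (by simpa using hV)
    refine TopCat.Presheaf.app_eq_of_germ_eq_of_specializes D (ρ g) (fun s _ => hspec s) (hVU hηV)
      (fun s h z => H s h z g) d ?_
    simpa only [TopCat.Presheaf.germ_res_apply] using congrArg (D.presheaf.germ V η hηV) hres
  tfae_have 4 → 5 := fun H s s' h z g hz =>
    H s (hspec s) z g (D.presheaf.stalkSpecializes_trans_eq_of_eq (hspec s') h hz)
  tfae_have 5 → 4 := fun H s => H s η
  tfae_finish

/-- let `D` be a sheaf of `G`-sets on an irreducible quasi-sober space `T`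
with generic point `η`; the `G`-action is encoded by a morphism of monoids
`ρ : G →* End D.val`, i.e. an action of `G` on each set of sections commuting with all
restriction maps (so that all restriction maps and hence also all germ and stalk maps
are `G`-equivariant).  Then the following are equivalent: (a) restriction maps to
nonempty opens are injective on orbits; (b) all germ maps are injective on orbits;
(c) germ maps at the generic point are injective on orbits (on nonempty opens);
(d) all stalk maps `D_s → D_η` are injective on orbits; (e) all specialization maps
between stalks are injective on orbits. -/
theorem sheaf_of_G_sets_injective_on_orbits_tfae
    {T : TopCat.{u}} [IrreducibleSpace T] [QuasiSober T]
    (η : T) (hη : IsGenericPoint η (Set.univ : Set T))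
    (G : Type u) [Group G]
    (D : TopCat.Sheaf (Type u) T) (ρ : G →* CategoryTheory.End D.val) :
    List.TFAE
      [ ∀ (U V : Opens T) (h : V ≤ U), (V : Set T).Nonempty →
          ∀ (d : D.val.obj (op U)) (g : G),
            D.val.map (homOfLE h).op ((ρ g).app (op U) d) = D.val.map (homOfLE h).op d →
              (ρ g).app (op U) d = d,
        ∀ (U : Opens T) (s : T) (hs : s ∈ U),
          ∀ (d : D.val.obj (op U)) (g : G),
            D.presheaf.germ U s hs ((ρ g).app (op U) d) = D.presheaf.germ U s hs d →
              (ρ g).app (op U) d = d,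
        ∀ (U : Opens T), (U : Set T).Nonempty → ∀ (hη' : η ∈ U),
          ∀ (d : D.val.obj (op U)) (g : G),
            D.presheaf.germ U η hη' ((ρ g).app (op U) d) = D.presheaf.germ U η hη' d →
              (ρ g).app (op U) d = d,
        ∀ (s : T) (h : η ⤳ s),
          ∀ (x : D.presheaf.stalk s) (g : G),
            D.presheaf.stalkSpecializes h
                ((TopCat.Presheaf.stalkFunctor (Type u) s).map (ρ g) x) =
              D.presheaf.stalkSpecializes h x →
              (TopCat.Presheaf.stalkFunctor (Type u) s).map (ρ g) x = x,
        ∀ (s s' : T) (h : s' ⤳ s),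
          ∀ (x : D.presheaf.stalk s) (g : G),
            D.presheaf.stalkSpecializes h
                ((TopCat.Presheaf.stalkFunctor (Type u) s).map (ρ g) x) =
              D.presheaf.stalkSpecializes h x →
              (TopCat.Presheaf.stalkFunctor (Type u) s).map (ρ g) x = x ] :=
  sheaf_of_G_sets_injective_on_orbits_tfae_general η hη G D ρ
end

section
/- Let G be a profinite group (a compact Hausdorff totally disconnected topological group), let T be a topological space, and let D be a sheaf of G-sets on T such that for every open U the G-set D(U) is smooth. Consider the set of pairs (U, γ) where U is a nonempty open subset of T and γ ⊆ D(U) is a G-orbit, partially ordered by: (U, γ) ≤ (U', γ') if and only if U ⊆ U' and γ is the image of γ' under the restriction map D(U') → D(U). Then every such pair (U, γ) admits a majorant that is a maximal element of this partially ordered set. -/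
/-!
An orbit `γ ⊆ D(U)` is finite, since the stabilizer of a section is an open subgroup of the
compact group `G` and so has finite index. By Zorn's lemma it suffices to bound a nonempty
chain `(U_i, γ_i)` from above. With the restriction maps, the orbits `γ_i` form an inverse
system of finite nonempty sets indexed by a directed set, so by König's lemma there are
sections `s_i ∈ γ_i` restricting to one another. As the `U_i` form a chain, the `s_i` agree on
overlaps and glue to a section `s` over `⋃ U_i`, and the orbit of `s` restricts onto every `γ_i`.
-/

open CategoryTheory TopologicalSpace Opposite

universe u

/-- A pair `(U, γ)` consisting of a nonempty open subset `U` of `T` and a `G`-orbit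
`γ ⊆ D(U)`, for a sheaf of `G`-sets `D` on `T` whose `G`-action is encoded by
`ρ : G →* End D.val`. -/
structure OrbitPair {T : TopCat.{u}} (G : Type u) [Group G]
    (D : TopCat.Sheaf (Type u) T) (ρ : G →* CategoryTheory.End D.val) where
  U : Opens T
  hU : (U : Set T).Nonempty
  γ : Set (D.val.obj (op U))
  isOrbit : ∃ d : D.val.obj (op U), γ = Set.range fun g : G => (ρ g).app (op U) d

/-- The partial order on such pairs: `(U, γ) ≤ (U', γ')` iff `U ⊆ U'` and `γ` is the
image of `γ'` under the restriction map `D(U') → D(U)`. -/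
def OrbitPair.le {T : TopCat.{u}} {G : Type u} [Group G]
    {D : TopCat.Sheaf (Type u) T} {ρ : G →* CategoryTheory.End D.val}
    (P Q : OrbitPair G D ρ) : Prop :=
  ∃ h : P.U ≤ Q.U, P.γ = D.val.map (homOfLE h).op '' Q.γ

theorem MulAction.finite_orbit_of_isOpen_stabilizer {G X : Type*} [Group G]
    [TopologicalSpace G] [SeparatelyContinuousMul G] [CompactSpace G] [MulAction G X] {x : X}
    (h : IsOpen (stabilizer G x : Set G)) : (orbit G x).Finite :=
  have := Subgroup.quotient_finite_of_isOpen _ h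
  Set.finite_coe_iff.mp ((orbitEquivQuotientStabilizer G x).finite_iff.mpr this)

section SectionOrbit

variable {C : Type*} [Category C] {F : C ⥤ Type*} {G : Type*} [Group G]

abbrev mulActionOfEndHom (ρ : G →* End F) (X : C) : MulAction G (F.obj X) where
  smul g d := (ρ g).app X d
  one_smul d := by change (ρ 1).app X d = d; rw [map_one]; rfl
  mul_smul a b d := by change (ρ (a * b)).app X d = _; rw [map_mul]; rfl

def sectionOrbit (ρ : G →* End F) {X : C} (d : F.obj X) : Set (F.obj X) :=
  Set.range fun g : G => (ρ g).app X d

variable (ρ : G →* End F)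

theorem mem_sectionOrbit_self {X : C} (d : F.obj X) : d ∈ sectionOrbit ρ d :=
  ⟨1, show (ρ 1).app X d = d by rw [map_one]; rfl⟩

theorem sectionOrbit_eq_of_mem {X : C} {d x : F.obj X} (hx : x ∈ sectionOrbit ρ d) :
    sectionOrbit ρ x = sectionOrbit ρ d :=
  letI := mulActionOfEndHom ρ X
  MulAction.orbit_eq_iff.mpr hx

theorem image_map_sectionOrbit {X Y : C} (f : X ⟶ Y) (d : F.obj X) :
    F.map f '' sectionOrbit ρ d = sectionOrbit ρ (F.map f d) := by
  rw [sectionOrbit, ← Set.range_comp]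
  exact congrArg Set.range (funext fun g => (NatTrans.naturality_apply (ρ g) f d).symm)

theorem sectionOrbit_finite [TopologicalSpace G] [SeparatelyContinuousMul G] [CompactSpace G]
    {X : C} {d : F.obj X} (h : IsOpen {g : G | (ρ g).app X d = d}) :
    (sectionOrbit ρ d).Finite :=
  letI := mulActionOfEndHom ρ X
  MulAction.finite_orbit_of_isOpen_stabilizer h

end SectionOrbit

namespace OrbitPair

variable {T : TopCat.{u}} {G : Type u} [Group G] {D : TopCat.Sheaf (Type u) T}
  {ρ : G →* End D.val}

theorem γ_eq_sectionOrbit_of_mem (P : OrbitPair G D ρ) {d : D.val.obj (op P.U)}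
    (hd : d ∈ P.γ) : P.γ = sectionOrbit ρ d := by
  obtain ⟨d₀, hγ⟩ := P.isOrbit
  rw [hγ] at hd ⊢
  exact (sectionOrbit_eq_of_mem ρ hd).symm

theorem γ_nonempty (P : OrbitPair G D ρ) : P.γ.Nonempty := by
  obtain ⟨d, hγ⟩ := P.isOrbit
  exact ⟨d, hγ ▸ mem_sectionOrbit_self ρ d⟩

theorem γ_finite [TopologicalSpace G] [SeparatelyContinuousMul G] [CompactSpace G]
    (hsm : ∀ (U : Opens T) (d : D.val.obj (op U)), IsOpen {g : G | (ρ g).app (op U) d = d})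
    (P : OrbitPair G D ρ) : P.γ.Finite := by
  obtain ⟨d, hγ⟩ := P.isOrbit
  exact hγ ▸ sectionOrbit_finite ρ (hsm P.U d)

instance : Preorder (OrbitPair G D ρ) where
  le := OrbitPair.le
  le_refl P := ⟨le_rfl, by rw [show (homOfLE le_rfl).op = 𝟙 (op P.U) from rfl, D.val.map_id,
    types_id, Set.image_id]⟩
  le_trans P Q R := by
    rintro ⟨hPQ, hP⟩ ⟨hQR, hQ⟩
    refine ⟨hPQ.trans hQR, ?_⟩
    rw [hP, hQ, ← Set.image_comp, ← types_comp, ← D.val.map_comp]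
    rfl

theorem U_mono {P Q : OrbitPair G D ρ} (h : P ≤ Q) : P.U ≤ Q.U :=
  h.1

theorem γ_eq_image_of_le {P Q : OrbitPair G D ρ} (h : P ≤ Q) :
    P.γ = D.val.map (homOfLE (U_mono h)).op '' Q.γ :=
  h.2

def ofSection (U : Opens T) (hU : (U : Set T).Nonempty) (d : D.val.obj (op U)) :
    OrbitPair G D ρ :=
  ⟨U, hU, sectionOrbit ρ d, d, rfl⟩

theorem le_ofSection {P : OrbitPair G D ρ} {V : Opens T} (hV : (V : Set T).Nonempty)
    (d : D.val.obj (op V)) (h : P.U ≤ V) (hd : D.val.map (homOfLE h).op d ∈ P.γ) :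
    P ≤ ofSection V hV d :=
  ⟨h, by rw [γ_eq_sectionOrbit_of_mem P hd]; exact (image_map_sectionOrbit ρ _ d).symm⟩

def orbitSubfunctor (c : Set (OrbitPair G D ρ)) :
    Subfunctor ((Monotone.functor (f := fun P : c => P.1.U) fun _ _ h => U_mono h).op ⋙ D.val)
    where
  obj P := P.unop.1.γ
  map f x hx := by
    rw [γ_eq_image_of_le (leOfHom f.unop)]
    exact Set.mem_image_of_mem _ hx

theorem exists_compatible_mem_of_isChain {c : Set (OrbitPair G D ρ)}
    (hc : IsChain (· ≤ ·) c) (hfin : ∀ P ∈ c, P.γ.Finite) :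
    ∃ s : ∀ P : c, D.val.obj (op P.1.U), (∀ P, s P ∈ P.1.γ) ∧
      ∀ {P Q : c} (h : P ≤ Q), D.val.map (homOfLE (U_mono h)).op (s Q) = s P := by
  have := hc.directedOn.isDirectedOrder
  have : ∀ P, Finite ((orbitSubfunctor c).toFunctor.obj P) := fun P =>
    (hfin _ P.unop.2).to_subtype
  have : ∀ P, Nonempty ((orbitSubfunctor c).toFunctor.obj P) := fun P =>
    P.unop.1.γ_nonempty.to_subtype
  obtain ⟨s, hs⟩ := nonempty_sections_of_finite_inverse_system (orbitSubfunctor c).toFunctor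
  exact ⟨fun P => (s (op P)).1, fun P => (s (op P)).2,
    fun h => congrArg Subtype.val (hs (homOfLE h).op)⟩

theorem exists_upperBound_of_isChain {c : Set (OrbitPair G D ρ)} (hc : IsChain (· ≤ ·) c)
    (hne : c.Nonempty) (hfin : ∀ P ∈ c, P.γ.Finite) : ∃ ub, ∀ P ∈ c, P ≤ ub := by
  obtain ⟨s, hs_mem, hs_res⟩ := exists_compatible_mem_of_isChain hc hfin
  let U : c → Opens T := fun P => P.1.U
  have hcompat : TopCat.Presheaf.IsCompatible D.val U s := by
    intro P Q
    -- both sides are then restrictions of one section, and `(Opens T)ᵒᵖ` is thin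
    rcases hc.total P.2 Q.2 with h | h
    · rw [← hs_res h, ← Functor.map_comp_apply]
      rfl
    · rw [← hs_res h, ← Functor.map_comp_apply]
      rfl
  obtain ⟨d, hd, -⟩ := D.existsUnique_gluing U s hcompat
  obtain ⟨P₀, hP₀⟩ := hne
  have hU : ((iSup U : Opens T) : Set T).Nonempty :=
    P₀.hU.mono (SetLike.coe_mono (le_iSup U ⟨P₀, hP₀⟩))
  exact ⟨ofSection (iSup U) hU d, fun P hP =>
    le_ofSection hU d (le_iSup U ⟨P, hP⟩) ((hd ⟨P, hP⟩).symm ▸ hs_mem ⟨P, hP⟩)⟩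

end OrbitPair

theorem orbitPair_exists_maximal_majorant_general
    {T : TopCat.{u}} (G : Type u) [Group G] [TopologicalSpace G] [IsTopologicalGroup G]
    [CompactSpace G]
    (D : TopCat.Sheaf (Type u) T) (ρ : G →* CategoryTheory.End D.val)
    (hsm : ∀ (U : Opens T) (d : D.val.obj (op U)),
      IsOpen {g : G | (ρ g).app (op U) d = d})
    (P : OrbitPair G D ρ) :
    ∃ Q : OrbitPair G D ρ, P.le Q ∧ ∀ R : OrbitPair G D ρ, Q.le R → R.le Q := by
  obtain ⟨Q, hPQ, hQ⟩ := zorn_le_nonempty₀ Set.univ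
    (fun c _ hc R hR => (OrbitPair.exists_upperBound_of_isChain hc ⟨R, hR⟩
      fun P _ => P.γ_finite hsm).imp fun ub hub => ⟨trivial, hub⟩) P trivial
  exact ⟨Q, hPQ, fun R => hQ.2 trivial⟩

/-- if `G` is a profinite group and `D` is a sheaf of smooth `G`-sets on a
topological space `T`, then every pair `(U, γ)` of a nonempty open `U` and a `G`-orbit
`γ ⊆ D(U)` admits a majorant which is a maximal element of the partially ordered set of
all such pairs. -/
theorem orbitPair_exists_maximal_majorant
    {T : TopCat.{u}} (G : Type u) [Group G] [TopologicalSpace G] [IsTopologicalGroup G]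
    [CompactSpace G] [T2Space G] [TotallyDisconnectedSpace G]
    (D : TopCat.Sheaf (Type u) T) (ρ : G →* CategoryTheory.End D.val)
    (hsm : ∀ (U : Opens T) (d : D.val.obj (op U)),
      IsOpen {g : G | (ρ g).app (op U) d = d})
    (P : OrbitPair G D ρ) :
    ∃ Q : OrbitPair G D ρ, P.le Q ∧ ∀ R : OrbitPair G D ρ, Q.le R → R.le Q :=
  orbitPair_exists_maximal_majorant_general G D ρ hsm P
end
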